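/- arXiv:1301.3669 — 5 statements merged into one kernel-verified Lean document; each statement's English description precedes it below -/
import Mathlib

section
/- For every positive integer n, β(n) − α(n) = n^{n+1}, where α(n) = Σ_{k=0}^{n} C(n,k) k^k (n−k)^{n−k} and β(n) = Σ_{k₁+k₂+k₃=n} (n!/(k₁!k₂!k₃!)) k₁^{k₁} k₂^{k₂} k₃^{k₃}, with the convention 0^0 = 1. -/
/-!
Write `n^{(j)} = n (n-1) ⋯ (n-j+1)` for the falling factorial. The key input is the Abel-type
identity `∑_{k+l=m} C(m,k) k^k (x+l)^l = ∑_{j+l=m} m^{(j)} (x+m)^l`: after writing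
`x + l = (x + m) - k`, expanding binomially and exchanging the order of summation, every inner sum
is an `r`-th forward difference `∑_{k+s=r} (-1)^s C(r,k) k^r = r!`.

At `x = 0` it gives `α(n) = ∑_{j+l=n} n^{(j)} n^l`. In `β(n) = ∑_a C(n,a) a^a α(n-a)` we
expand `α(n-a)` the same way, trade `C(n,a) (n-a)^{(j)}` for `n^{(j)} C(n-j,a)`, and apply the
identity once more, now at `x = j`; this gives `β(n) = ∑_{j+l=n} (j+1) n^{(j)} n^l`. The
difference `∑_j j n^{(j)} n^{n-j}` telescopes to `n^{n+1}`, because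
`j n^{(j)} n^{n-j} = n^{(j)} n^{n+1-j} - n^{(j+1)} n^{n-j}`.
-/

open Finset Nat

theorem Nat.factorial_div_factorial_mul_factorial_mul_factorial (a b c : ℕ) :
    (a + b + c)! / (a ! * b ! * c !) = (a + b + c).choose a * (b + c).choose b := by
  have h : (a + b + c)! = (a + b + c).choose a * (b + c).choose b * (a ! * b ! * c !) := by
    rw [add_assoc, add_comm a, ← add_choose_mul_factorial_mul_factorial (b + c) a, add_comm b c,
      ← add_choose_mul_factorial_mul_factorial c b]
    ring
  rw [h, Nat.mul_div_cancel _ (by positivity)]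

theorem Nat.choose_mul_choose_comm (a b c : ℕ) :
    (a + b + c).choose a * (b + c).choose b = (a + b + c).choose b * (a + c).choose a := by
  rw [← factorial_div_factorial_mul_factorial_mul_factorial, add_comm a b,
    ← factorial_div_factorial_mul_factorial_mul_factorial, mul_comm (a !)]

namespace Finset.Nat

variable {M : Type*} [AddCommMonoid M]

theorem sum_antidiagonal_antidiagonal_assoc (n : ℕ) (f : ℕ → ℕ → ℕ → M) :
    ∑ p ∈ antidiagonal n, ∑ q ∈ antidiagonal p.2, f p.1 q.1 q.2 =
      ∑ p ∈ antidiagonal n, ∑ q ∈ antidiagonal p.1, f q.1 q.2 p.2 := by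
  rw [sum_sigma', sum_sigma']
  refine sum_bij' (fun x _ => ⟨(x.1.1 + x.2.1, x.2.2), (x.1.1, x.2.1)⟩)
    (fun x _ => ⟨(x.2.1, x.2.2 + x.1.2), (x.2.2, x.1.2)⟩) ?_ ?_ ?_ ?_ ?_ <;>
  simp only [mem_sigma, HasAntidiagonal.mem_antidiagonal, and_imp, Sigma.forall, Prod.forall]
  all_goals rintro a b c d rfl rfl; simp [add_assoc]

theorem sum_antidiagonal_antidiagonal_comm (n : ℕ) (f : ℕ → ℕ → ℕ → M) :
    ∑ p ∈ antidiagonal n, ∑ q ∈ antidiagonal p.2, f p.1 q.1 q.2 =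
      ∑ p ∈ antidiagonal n, ∑ q ∈ antidiagonal p.2, f q.1 p.1 q.2 := by
  rw [sum_antidiagonal_antidiagonal_assoc,
    sum_antidiagonal_antidiagonal_assoc n fun a b c => f b a c]
  exact sum_congr rfl fun p _ => sum_antidiagonal_swap (f := fun q => f q.1 q.2 p.2) |>.symm

theorem sum_antidiagonal_antidiagonal_choose_mul_choose_smul_comm (n : ℕ)
    (f : ℕ → ℕ → ℕ → M) :
    ∑ p ∈ antidiagonal n, ∑ q ∈ antidiagonal p.2,
        (n.choose p.1 * p.2.choose q.1) • f p.1 q.1 q.2 =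
      ∑ p ∈ antidiagonal n, ∑ q ∈ antidiagonal p.2,
        (n.choose p.1 * p.2.choose q.1) • f q.1 p.1 q.2 := by
  have h := sum_antidiagonal_antidiagonal_comm n fun a b c =>
    ((a + b + c).choose a * (b + c).choose b) • f a b c
  refine .trans (sum_congr rfl fun p hp => sum_congr rfl fun q hq => ?_) (h.trans
    (sum_congr rfl fun p hp => sum_congr rfl fun q hq => ?_)) <;>
  rw [HasAntidiagonal.mem_antidiagonal] at hp hq <;>
  simp only [← hp, ← hq]
  · rw [add_assoc]
  · rw [choose_mul_choose_comm, add_comm q.1 p.1, add_assoc]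

theorem sum_antidiagonal_antidiagonal_choose_mul_descFactorial_smul_comm (n : ℕ)
    (f : ℕ → ℕ → ℕ → M) :
    ∑ p ∈ antidiagonal n, ∑ q ∈ antidiagonal p.2,
        (n.choose p.1 * p.2.descFactorial q.1) • f p.1 q.1 q.2 =
      ∑ p ∈ antidiagonal n, ∑ q ∈ antidiagonal p.2,
        (n.descFactorial p.1 * p.2.choose q.1) • f q.1 p.1 q.2 := by
  have h := sum_antidiagonal_antidiagonal_choose_mul_choose_smul_comm n fun a b c => b ! • f a b c
  simp only [smul_smul] at h
  simp only [descFactorial_eq_factorial_mul_choose]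
  convert h using 4 <;> ring

end Finset.Nat

theorem sum_antidiagonal_neg_one_pow_mul_choose_mul_pow {R : Type*} [CommRing R] (r : ℕ) :
    ∑ p ∈ antidiagonal r, (-1 : R) ^ p.2 * r.choose p.1 * (p.1 : R) ^ r = r ! := by
  have h := congr_fun (fwdDiff_iter_eq_factorial (R := R) (n := r)) 0
  rw [fwdDiff_iter_eq_sum_shift] at h
  rw [Finset.Nat.sum_antidiagonal_eq_sum_range_succ
    (fun i j => (-1 : R) ^ j * r.choose i * (i : R) ^ r)]
  simpa [zsmul_eq_mul] using h

theorem sum_antidiagonal_choose_mul_pow_self_mul_add_pow {R : Type*} [CommRing R] (m : ℕ)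
    (x : R) :
    ∑ p ∈ antidiagonal m, (m.choose p.1 : R) * (p.1 : R) ^ p.1 * (x + p.2) ^ p.2 =
      ∑ p ∈ antidiagonal m, (m.descFactorial p.1 : R) * (x + m) ^ p.2 := by
  calc _ = ∑ p ∈ antidiagonal m, ∑ q ∈ antidiagonal p.2, (m.choose p.1 * p.2.choose q.1) •
          ((-1) ^ q.2 * (p.1 : R) ^ (p.1 + q.2) * (x + m) ^ q.1) := by
        refine sum_congr rfl fun p hp => ?_
        rw [HasAntidiagonal.mem_antidiagonal] at hp
        rw [show x + (p.2 : R) = (x + m) + -p.1 by rw [← hp]; push_cast; ring,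
          (Commute.all _ _).add_pow', mul_sum]
        refine sum_congr rfl fun q _ => ?_
        rw [nsmul_eq_mul, neg_pow, pow_add]
        ring
    _ = ∑ p ∈ antidiagonal m, ∑ q ∈ antidiagonal p.2, (m.choose p.1 * p.2.choose q.1) •
          ((-1) ^ q.2 * (q.1 : R) ^ (q.1 + q.2) * (x + m) ^ p.1) :=
        Finset.Nat.sum_antidiagonal_antidiagonal_choose_mul_choose_smul_comm m fun a b c =>
          (-1) ^ c * (a : R) ^ (a + c) * (x + m) ^ b
    _ = ∑ p ∈ antidiagonal m, (m.choose p.1 : R) * (x + m) ^ p.1 *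
          ∑ q ∈ antidiagonal p.2, (-1 : R) ^ q.2 * p.2.choose q.1 * (q.1 : R) ^ p.2 := by
        refine sum_congr rfl fun p _ => ?_
        rw [mul_sum]
        refine sum_congr rfl fun q hq => ?_
        rw [HasAntidiagonal.mem_antidiagonal.1 hq, nsmul_eq_mul]
        push_cast
        ring
    _ = ∑ p ∈ antidiagonal m, (m.descFactorial p.2 : R) * (x + m) ^ p.1 := by
        refine sum_congr rfl fun p hp => ?_
        rw [HasAntidiagonal.mem_antidiagonal] at hp
        rw [sum_antidiagonal_neg_one_pow_mul_choose_mul_pow, descFactorial_eq_factorial_mul_choose,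
          ← choose_symm_of_eq_add hp.symm]
        push_cast
        ring
    _ = _ := sum_antidiagonal_swap (f := fun p => (m.descFactorial p.1 : R) * (x + m) ^ p.2)

theorem sum_antidiagonal_choose_mul_pow_self_mul_add_pow_nat (m x : ℕ) :
    ∑ p ∈ antidiagonal m, m.choose p.1 * p.1 ^ p.1 * (x + p.2) ^ p.2 =
      ∑ p ∈ antidiagonal m, m.descFactorial p.1 * (x + m) ^ p.2 := by
  exact_mod_cast sum_antidiagonal_choose_mul_pow_self_mul_add_pow m (x : ℤ)

theorem sum_antidiagonal_choose_mul_pow_self_mul_pow_self (n : ℕ) :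
    ∑ p ∈ antidiagonal n, n.choose p.1 * p.1 ^ p.1 * p.2 ^ p.2 =
      ∑ p ∈ antidiagonal n, n.descFactorial p.1 * n ^ p.2 := by
  simpa using sum_antidiagonal_choose_mul_pow_self_mul_add_pow_nat n 0

theorem sum_antidiagonal_antidiagonal_factorial_div_mul (n : ℕ) (f : ℕ → ℕ) :
    ∑ p ∈ antidiagonal n, ∑ q ∈ antidiagonal p.2,
        n ! / (p.1 ! * q.1 ! * q.2 !) * f p.1 * f q.1 * f q.2 =
      ∑ p ∈ antidiagonal n, n.choose p.1 * f p.1 *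
        ∑ q ∈ antidiagonal p.2, p.2.choose q.1 * f q.1 * f q.2 := by
  refine sum_congr rfl fun p hp => ?_
  rw [mul_sum]
  refine sum_congr rfl fun q hq => ?_
  rw [HasAntidiagonal.mem_antidiagonal] at hp hq
  rw [← hp, ← hq, ← add_assoc, factorial_div_factorial_mul_factorial_mul_factorial, add_assoc]
  ring

theorem sum_antidiagonal_descFactorial_mul_sum_descFactorial_mul (n : ℕ) (g : ℕ → ℕ) :
    ∑ p ∈ antidiagonal n, n.descFactorial p.1 *
        ∑ q ∈ antidiagonal p.2, p.2.descFactorial q.1 * g q.2 =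
      ∑ p ∈ antidiagonal n, (p.1 + 1) * n.descFactorial p.1 * g p.2 := by
  calc _ = ∑ p ∈ antidiagonal n, ∑ q ∈ antidiagonal p.2,
          n.descFactorial (p.1 + q.1) * g q.2 := by
        refine sum_congr rfl fun p hp => ?_
        rw [mul_sum]
        refine sum_congr rfl fun q _ => ?_
        rw [← mul_assoc, ← descFactorial_mul_descFactorial (le_add_right p.1 q.1),
          Nat.add_sub_cancel_left, ← HasAntidiagonal.mem_antidiagonal.1 hp,
          Nat.add_sub_cancel_left, mul_comm (p.2.descFactorial q.1)]
    _ = ∑ p ∈ antidiagonal n, ∑ q ∈ antidiagonal p.1, n.descFactorial p.1 * g p.2 := by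
        rw [Finset.Nat.sum_antidiagonal_antidiagonal_assoc n fun j i t =>
          n.descFactorial (j + i) * g t]
        exact sum_congr rfl fun p _ => sum_congr rfl fun q hq => by
          rw [HasAntidiagonal.mem_antidiagonal.1 hq]
    _ = _ := by simp only [sum_const, card_antidiagonal, smul_eq_mul, mul_assoc]

theorem sum_range_mul_descFactorial_mul_pow_add (n N : ℕ) (hN : N ≤ n + 1) :
    ∑ m ∈ range N, m * n.descFactorial m * n ^ (n - m) + n.descFactorial N * n ^ (n + 1 - N) =
      n ^ (n + 1) := by
  induction N with
  | zero => simp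
  | succ N ih =>
    have hNn : N ≤ n := by omega
    rw [← ih (by omega), sum_range_succ, add_assoc, descFactorial_succ,
      show n + 1 - (N + 1) = n - N by omega, show n + 1 - N = n - N + 1 by omega, pow_succ]
    congr 1
    rw [← add_mul, ← add_mul, Nat.add_sub_cancel' hNn]
    ring

theorem sum_antidiagonal_mul_descFactorial_mul_pow (n : ℕ) :
    ∑ p ∈ antidiagonal n, p.1 * n.descFactorial p.1 * n ^ p.2 = n ^ (n + 1) := by
  rw [Finset.Nat.sum_antidiagonal_eq_sum_range_succ (fun i j => i * n.descFactorial i * n ^ j)]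
  simpa [descFactorial_eq_zero_iff_lt.2 (lt_add_one n)] using
    sum_range_mul_descFactorial_mul_pow_add n (n + 1) le_rfl

theorem sum_antidiagonal_antidiagonal_trinomial_mul_pow_self (n : ℕ) :
    ∑ p ∈ antidiagonal n, ∑ q ∈ antidiagonal p.2,
        n ! / (p.1 ! * q.1 ! * q.2 !) * p.1 ^ p.1 * q.1 ^ q.1 * q.2 ^ q.2 =
      ∑ p ∈ antidiagonal n, (p.1 + 1) * n.descFactorial p.1 * n ^ p.2 := by
  rw [sum_antidiagonal_antidiagonal_factorial_div_mul n fun k => k ^ k]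
  calc _ = ∑ p ∈ antidiagonal n, ∑ q ∈ antidiagonal p.2,
          (n.choose p.1 * p.2.descFactorial q.1) • (p.1 ^ p.1 * (q.1 + q.2) ^ q.2) := by
        refine sum_congr rfl fun p _ => ?_
        rw [sum_antidiagonal_choose_mul_pow_self_mul_pow_self, mul_sum]
        refine sum_congr rfl fun q hq => ?_
        rw [HasAntidiagonal.mem_antidiagonal.1 hq, smul_eq_mul]
        ring
    _ = ∑ p ∈ antidiagonal n, ∑ q ∈ antidiagonal p.2,
          (n.descFactorial p.1 * p.2.choose q.1) • (q.1 ^ q.1 * (p.1 + q.2) ^ q.2) :=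
        Finset.Nat.sum_antidiagonal_antidiagonal_choose_mul_descFactorial_smul_comm n fun a j l =>
          a ^ a * (j + l) ^ l
    _ = ∑ p ∈ antidiagonal n, n.descFactorial p.1 *
          ∑ q ∈ antidiagonal p.2, p.2.descFactorial q.1 * n ^ q.2 := by
        refine sum_congr rfl fun p hp => ?_
        rw [← HasAntidiagonal.mem_antidiagonal.1 hp,
          ← sum_antidiagonal_choose_mul_pow_self_mul_add_pow_nat, mul_sum]
        exact sum_congr rfl fun q _ => by rw [smul_eq_mul]; ring
    _ = _ := sum_antidiagonal_descFactorial_mul_sum_descFactorial_mul n (n ^ ·)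

theorem beta_sub_alpha_general (n : ℕ) :
    (∑ p ∈ Finset.HasAntidiagonal.antidiagonal n, ∑ q ∈ Finset.HasAntidiagonal.antidiagonal p.2,
      n ! / ((p.1)! * (q.1)! * (q.2)!) * p.1 ^ p.1 * q.1 ^ q.1 * q.2 ^ q.2)
    - (∑ k ∈ Finset.range (n + 1), n.choose k * k ^ k * (n - k) ^ (n - k))
    = n ^ (n + 1) := by
  rw [← Finset.Nat.sum_antidiagonal_eq_sum_range_succ (fun i j => n.choose i * i ^ i * j ^ j),
    sum_antidiagonal_choose_mul_pow_self_mul_pow_self,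
    sum_antidiagonal_antidiagonal_trinomial_mul_pow_self,
    ← sum_antidiagonal_mul_descFactorial_mul_pow]
  refine Nat.sub_eq_of_eq_add ?_
  rw [← sum_add_distrib]
  exact sum_congr rfl fun p _ => by ring

/-- The `n^n`-rescaled form of Lacasse's conjecture: `β(n) − α(n) = n^{n+1}`, where
`α(n) = Σ_{k=0}^{n} C(n,k) k^k (n−k)^{n−k}` and
`β(n) = Σ_{k₁+k₂+k₃=n} (n!/(k₁!k₂!k₃!)) k₁^{k₁} k₂^{k₂} k₃^{k₃}`,
with the convention `0^0 = 1`. -/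
theorem beta_sub_alpha (n : ℕ) (hn : 0 < n) :
    (∑ p ∈ Finset.HasAntidiagonal.antidiagonal n, ∑ q ∈ Finset.HasAntidiagonal.antidiagonal p.2,
      n ! / ((p.1)! * (q.1)! * (q.2)!) * p.1 ^ p.1 * q.1 ^ q.1 * q.2 ^ q.2)
    - (∑ k ∈ Finset.range (n + 1), n.choose k * k ^ k * (n - k) ^ (n - k))
    = n ^ (n + 1) :=
  beta_sub_alpha_general n
end

section
/- For every positive integer n, Σ_{k=0}^{n} C(n,k) k^k (n−k)^{n−k} = Σ_{k=0}^{n} (n!/k!) n^k, with the convention 0^0 = 1. -/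
/-!
Put `F_n(x, y) = ∑_{i+j=n} C(n,i) (x+i)^i (y+j)^j`, so that the left-hand side is `F_n(0, 0)`.
Splitting `(x+i)^i = x (x+i)^(i-1) + i (x+i)^(i-1)` gives
`F_{n+1}(x, y) = A_{n+1}(x, y) + (n+1) F_n(x+1, y)`, where `A_n(x, y) = (x+y+n)^n` is Abel's
identity. Hence `F_n(x, y) = ∑_{j ≤ n} (n!/j!) s^j` with `s = x+y+n`.
Abel's identity is proved in the same induction on `n`: Pascal's rule turns `A_{n+1}(x, y)` into
`(x+y+n+1) A_n(x, y+1)` up to the difference `x (F_n(x+1, y) - F_n(x, y+1))`, which vanishes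
because `F_n` depends only on `x + y`.
-/

open Finset Nat

section

variable {R : Type*} [CommSemiring R]

def abelPoly (x : R) : ℕ → R
  | 0 => 1
  | i + 1 => x * (x + (i + 1 : ℕ)) ^ i

def abelSum (n : ℕ) (x y : R) : R :=
  ∑ p ∈ antidiagonal n, n.choose p.1 * abelPoly x p.1 * (y + p.2) ^ p.2

def selfPowSum (n : ℕ) (x y : R) : R :=
  ∑ p ∈ antidiagonal n, n.choose p.1 * (x + p.1) ^ p.1 * (y + p.2) ^ p.2

-- `n.descFactorial i = n! / j!` for `i + j = n`, with no truncating division.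
def descFactorialSum (n : ℕ) (s : R) : R :=
  ∑ p ∈ antidiagonal n, n.descFactorial p.1 * s ^ p.2

theorem abelPoly_mul_add_self (x : R) (i : ℕ) : abelPoly x i * (x + i) = x * (x + i) ^ i := by
  cases i with
  | zero => simp [abelPoly]
  | succ i => rw [abelPoly, pow_succ]; ring

theorem add_pow_self_eq_abelPoly_add (x : R) (i : ℕ) :
    (x + (i + 1 : ℕ)) ^ (i + 1) = abelPoly x (i + 1) + (i + 1 : ℕ) * (x + 1 + i) ^ i := by
  rw [abelPoly, pow_succ]; push_cast; ring

theorem descFactorialSum_succ (n : ℕ) (s : R) :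
    descFactorialSum (n + 1) s = s ^ (n + 1) + (n + 1) * descFactorialSum n s := by
  simp only [descFactorialSum, Nat.sum_antidiagonal_succ, Nat.succ_descFactorial_succ, mul_sum]
  push_cast
  simp [mul_assoc]

theorem selfPowSum_succ (n : ℕ) (x y : R) :
    selfPowSum (n + 1) x y = abelSum (n + 1) x y + (n + 1) * selfPowSum n (x + 1) y := by
  have choose_mul (i : ℕ) :
      ((n + 1).choose (i + 1) : R) * (i + 1 : ℕ) = (n + 1) * n.choose i := by
    rw [← Nat.cast_mul, ← Nat.add_one_mul_choose_eq]
    push_cast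
    rfl
  rw [selfPowSum, abelSum, selfPowSum, Nat.sum_antidiagonal_succ, Nat.sum_antidiagonal_succ,
    mul_sum, add_assoc, ← sum_add_distrib]
  congr 1
  · simp [abelPoly]
  · refine sum_congr rfl fun p _ => ?_
    rw [add_pow_self_eq_abelPoly_add, mul_add, add_mul]
    congr 1
    calc _ = ((n + 1).choose (p.1 + 1) * (p.1 + 1 : ℕ) : R) *
          (x + 1 + p.1) ^ p.1 * (y + p.2) ^ p.2 := by ring
      _ = _ := by rw [choose_mul]; ring

theorem abelSum_succ (n : ℕ) (x y : R) :
    abelSum (n + 1) x y = ∑ p ∈ antidiagonal n,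
      n.choose p.1 * abelPoly x p.1 * (y + 1 + p.2) ^ (p.2 + 1) + x * selfPowSum n (x + 1) y := by
  have pascal : abelSum (n + 1) x y =
      ∑ p ∈ antidiagonal (n + 1), n.choose p.1 * abelPoly x p.1 * (y + p.2) ^ p.2 +
        ∑ p ∈ antidiagonal n, n.choose p.1 * abelPoly x (p.1 + 1) * (y + p.2) ^ p.2 := by
    rw [abelSum, Nat.sum_antidiagonal_succ, Nat.sum_antidiagonal_succ, add_assoc,
      ← sum_add_distrib]
    simp only [Nat.choose_succ_succ', Nat.choose_zero_right, Nat.cast_add, add_mul]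
    exact congrArg _ (sum_congr rfl fun _ _ => add_comm _ _)
  have shifted :
      ∑ p ∈ antidiagonal (n + 1), (n.choose p.1 * abelPoly x p.1 * (y + p.2) ^ p.2 : R) =
      ∑ p ∈ antidiagonal n, n.choose p.1 * abelPoly x p.1 * (y + 1 + p.2) ^ (p.2 + 1) := by
    rw [Nat.sum_antidiagonal_succ']
    simp [add_assoc, add_comm (1 : R)]
  have peeled :
      ∑ p ∈ antidiagonal n, (n.choose p.1 * abelPoly x (p.1 + 1) * (y + p.2) ^ p.2 : R) =
      x * selfPowSum n (x + 1) y := by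
    rw [selfPowSum, mul_sum]
    refine sum_congr rfl fun p _ => ?_
    rw [abelPoly]; push_cast; ring
  rw [pascal, shifted, peeled]

theorem mul_abelSum (n : ℕ) (x y : R) :
    (x + y + (n + 1)) * abelSum n x (y + 1) = ∑ p ∈ antidiagonal n,
      n.choose p.1 * abelPoly x p.1 * (y + 1 + p.2) ^ (p.2 + 1) + x * selfPowSum n x (y + 1) := by
  rw [abelSum, selfPowSum, mul_sum, mul_sum, ← sum_add_distrib]
  refine sum_congr rfl fun p hp => ?_
  have hn : (n : R) = p.1 + p.2 := by
    rw [← Nat.cast_add, mem_antidiagonal.mp hp]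
  calc _ = n.choose p.1 * abelPoly x p.1 * (y + 1 + p.2) ^ p.2 * (y + 1 + p.2) +
        n.choose p.1 * (abelPoly x p.1 * (x + p.1)) * (y + 1 + p.2) ^ p.2 := by rw [hn]; ring
    _ = _ := by rw [abelPoly_mul_add_self, pow_succ]; ring

theorem abelSum_eq_and_selfPowSum_eq (n : ℕ) :
    (∀ x y : R, abelSum n x y = (x + y + n) ^ n) ∧
      ∀ x y : R, selfPowSum n x y = descFactorialSum n (x + y + n) := by
  induction n with
  | zero => simp [abelSum, selfPowSum, descFactorialSum, abelPoly]
  | succ n ih =>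
    obtain ⟨abel, selfPow⟩ := ih
    have shift (x y : R) : selfPowSum n (x + 1) y = selfPowSum n x (y + 1) := by
      rw [selfPow, selfPow, add_right_comm x 1 y, add_assoc x y 1]
    have abel_succ (x y : R) : abelSum (n + 1) x y = (x + y + (n + 1 : ℕ)) ^ (n + 1) := by
      rw [abelSum_succ, shift, ← mul_abelSum, abel, pow_succ]
      push_cast; ring
    refine ⟨abel_succ, fun x y => ?_⟩
    rw [selfPowSum_succ, abel_succ, selfPow, descFactorialSum_succ,
      show x + 1 + y + n = x + y + (n + 1 : ℕ) by push_cast; ring]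

end

theorem alpha_eval_general (n : ℕ) :
    ∑ k ∈ Finset.range (n + 1), n.choose k * k ^ k * (n - k) ^ (n - k)
    = ∑ k ∈ Finset.range (n + 1), n ! / k ! * n ^ k := by
  have lhs :
      ∑ k ∈ range (n + 1), n.choose k * k ^ k * (n - k) ^ (n - k) = selfPowSum n 0 0 := by
    rw [selfPowSum, Nat.sum_antidiagonal_eq_sum_range_succ_mk]
    simp
  have rhs : ∑ k ∈ range (n + 1), n ! / k ! * n ^ k = descFactorialSum n n := by
    rw [descFactorialSum, ← Nat.sum_antidiagonal_swap, Nat.sum_antidiagonal_eq_sum_range_succ_mk]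
    refine sum_congr rfl fun k hk => ?_
    simp only [Prod.swap_prod_mk, Nat.cast_id]
    rw [Nat.descFactorial_eq_div (Nat.sub_le n k),
      Nat.sub_sub_self (Nat.lt_succ_iff.mp (mem_range.mp hk))]
  rw [lhs, rhs, (abelSum_eq_and_selfPowSum_eq n).2]
  simp

/-- `α(n) = Σ_{k=0}^{n} C(n,k) k^k (n−k)^{n−k} = Σ_{k=0}^{n} (n!/k!) n^k`,
with the convention `0^0 = 1`. -/
theorem alpha_eval (n : ℕ) (hn : 0 < n) :
    ∑ k ∈ Finset.range (n + 1), n.choose k * k ^ k * (n - k) ^ (n - k)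
    = ∑ k ∈ Finset.range (n + 1), n ! / k ! * n ^ k :=
  alpha_eval_general n
end

section
/- For every positive integer n, Σ_{k₁+k₂+k₃=n} (n!/(k₁!k₂!k₃!)) k₁^{k₁} k₂^{k₂} k₃^{k₃} = Σ_{k=0}^{n} (n!/k!) (n+1−k) n^k, where the left sum is over triples of nonnegative integers summing to n and 0^0 = 1. -/
/-!
Splitting the multinomial coefficient as `C(n, k₁) C(k₂ + k₃, k₂)` gives
`β(n) = Σ_k C(n, k) k^k α(n - k)` with `α(m) = Σ_j C(m, j) j^j (m - j)^(m - j)`.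
Both sums are values of identities in a free variable `y`: Abel's identity
`Σ_u C(m, u) u^u (y - u)^(m - u) = Σ_i m!/i! y^i`, which gives `α(m)` at `y = m`, and its iterate
`Σ_k C(n, k) k^k Σ_i (n - k)!/i! (y - k)^i = Σ_i n!/i! (n + 1 - i) y^i`, which gives `β(n)` at
`y = n`. Expanding the powers of `y - u` binomially and regrouping the trinomial sums reduces
both to the finite difference identity `Σ_u (-1)^(s - u) C(s, u) u^s = s!`.
-/

open Finset Nat

namespace Nat

theorem choose_add_add_mul_choose_add (a b c : ℕ) :
    (a + b + c).choose a * (b + c).choose b = (a + b + c).choose (a + b) * (a + b).choose a := by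
  rw [choose_mul (le_add_right a b), Nat.add_sub_cancel_left, add_assoc,
    Nat.add_sub_cancel_left]

theorem factorial_div_factorial_mul_factorial_mul_factorial_s3 (a b c : ℕ) :
    (a + b + c)! / (a ! * b ! * c !) = (a + b + c).choose a * (b + c).choose b := by
  refine Nat.div_eq_of_eq_mul_left (by positivity) ?_
  rw [add_assoc, ← Nat.add_choose_mul_factorial_mul_factorial a (b + c),
    ← Nat.add_choose_mul_factorial_mul_factorial b c, Nat.choose_symm_add, Nat.choose_symm_add]
  ring

theorem factorial_add_div_factorial (a b : ℕ) : (a + b)! / b ! = (a + b).choose a * a ! := by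
  refine Nat.div_eq_of_eq_mul_left (by positivity) ?_
  rw [Nat.choose_symm_add]
  exact (Nat.add_choose_mul_factorial_mul_factorial a b).symm

end Nat

section Semiring

variable {R : Type*} [Semiring R]

theorem sum_antidiagonal_choose_mul_sum_antidiagonal_choose_assoc (n : ℕ)
    (f : ℕ → ℕ → ℕ → R) :
    ∑ p ∈ antidiagonal n, (n.choose p.1 : R) *
        ∑ q ∈ antidiagonal p.2, (p.2.choose q.1 : R) * f p.1 q.1 q.2 =
      ∑ p ∈ antidiagonal n, (n.choose p.1 : R) *
        ∑ q ∈ antidiagonal p.1, (p.1.choose q.1 : R) * f q.1 q.2 p.2 := by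
  simp only [mul_sum, sum_sigma']
  refine sum_nbij' (fun x ↦ ⟨(x.1.1 + x.2.1, x.2.2), (x.1.1, x.2.1)⟩)
    (fun x ↦ ⟨(x.2.1, x.2.2 + x.1.2), (x.2.2, x.1.2)⟩) ?_ ?_ ?_ ?_ ?_
  all_goals rintro ⟨⟨a, b⟩, ⟨c, d⟩⟩
  all_goals simp only [mem_sigma, HasAntidiagonal.mem_antidiagonal,
    Sigma.mk.injEq, Prod.mk.injEq, heq_eq_eq, and_true, true_and]
  iterate 4 · omega
  · rintro ⟨rfl, rfl⟩
    rw [← mul_assoc, ← mul_assoc, ← Nat.cast_mul, ← Nat.cast_mul, ← add_assoc,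
      choose_add_add_mul_choose_add]

theorem sum_antidiagonal_choose_mul_sum_antidiagonal_choose_left_comm (n : ℕ)
    (f : ℕ → ℕ → ℕ → R) :
    ∑ p ∈ antidiagonal n, (n.choose p.1 : R) *
        ∑ q ∈ antidiagonal p.2, (p.2.choose q.1 : R) * f p.1 q.1 q.2 =
      ∑ p ∈ antidiagonal n, (n.choose p.1 : R) *
        ∑ q ∈ antidiagonal p.2, (p.2.choose q.1 : R) * f q.1 p.1 q.2 := by
  simp only [mul_sum, sum_sigma']
  refine sum_nbij' (fun x ↦ ⟨(x.2.1, x.1.1 + x.2.2), (x.1.1, x.2.2)⟩)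
    (fun x ↦ ⟨(x.2.1, x.1.1 + x.2.2), (x.1.1, x.2.2)⟩) ?_ ?_ ?_ ?_ ?_
  all_goals rintro ⟨⟨a, b⟩, ⟨c, d⟩⟩
  all_goals simp only [mem_sigma, HasAntidiagonal.mem_antidiagonal,
    Sigma.mk.injEq, Prod.mk.injEq, heq_eq_eq, and_true, true_and]
  iterate 4 · omega
  · rintro ⟨rfl, rfl⟩
    have h := choose_add_add_mul_choose_add c a d
    rw [add_comm c a, ← Nat.choose_symm_add] at h
    rw [← mul_assoc, ← mul_assoc, ← Nat.cast_mul, ← Nat.cast_mul, ← add_assoc,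
      choose_add_add_mul_choose_add, h]

theorem sum_antidiagonal_choose_mul_factorial_mul_factorial (c : ℕ) :
    ∑ q ∈ antidiagonal c, (c.choose q.1 : R) * ((q.1 ! : R) * q.2 !) = (c + 1)! := by
  have hterm : ∀ q ∈ antidiagonal c, (c.choose q.1 : R) * ((q.1 ! : R) * q.2 !) = c ! := by
    intro q hq
    rw [← HasAntidiagonal.mem_antidiagonal.mp hq, ← Nat.add_choose_mul_factorial_mul_factorial,
      Nat.choose_symm_add, Nat.cast_mul, Nat.cast_mul, mul_assoc]
  rw [sum_congr rfl hterm, sum_const, Nat.card_antidiagonal, nsmul_eq_mul, Nat.factorial_succ,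
    Nat.cast_mul, Nat.cast_succ]

end Semiring

section CommRing

variable {R : Type*} [CommRing R]

theorem sum_antidiagonal_choose_mul_pow_self_mul_neg_pow (s : ℕ) :
    ∑ p ∈ antidiagonal s, (s.choose p.1 : R) * ((p.1 : R) ^ p.1 * (-(p.1 : R)) ^ p.2) =
      s ! := by
  have hΔ := fwdDiff_iter_eq_sum_shift (1 : R) (fun r ↦ r ^ s) s 0
  rw [fwdDiff_iter_eq_factorial] at hΔ
  have hterm : ∀ p ∈ antidiagonal s, (s.choose p.1 : R) * ((p.1 : R) ^ p.1 * (-(p.1 : R)) ^ p.2)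
      = (-1) ^ p.2 * s.choose p.1 * (p.1 : R) ^ s := by
    intro p hp
    rw [neg_pow, ← HasAntidiagonal.mem_antidiagonal.mp hp, pow_add]
    ring
  rw [sum_congr rfl hterm, Nat.sum_antidiagonal_eq_sum_range_succ
    (fun k l ↦ (-1 : R) ^ l * s.choose k * (k : R) ^ s)]
  simpa [zsmul_eq_mul] using hΔ.symm

theorem sum_antidiagonal_choose_mul_pow_self_mul_sub_pow (m : ℕ) (y : R) :
    ∑ p ∈ antidiagonal m, (m.choose p.1 : R) * ((p.1 : R) ^ p.1 * (y - p.1) ^ p.2) =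
      ∑ p ∈ antidiagonal m, (m.choose p.1 : R) * ((p.1 ! : R) * y ^ p.2) := by
  calc _ = ∑ p ∈ antidiagonal m, (m.choose p.1 : R) * ∑ q ∈ antidiagonal p.2,
          (p.2.choose q.1 : R) * ((p.1 : R) ^ p.1 * (-(p.1 : R)) ^ q.1 * y ^ q.2) := by
        refine sum_congr rfl fun p _ ↦ ?_
        rw [sub_eq_neg_add, (Commute.all (-(p.1 : R)) y).add_pow']
        simp only [mul_sum, nsmul_eq_mul]
        exact sum_congr rfl fun q _ ↦ by ring
    _ = ∑ p ∈ antidiagonal m, (m.choose p.1 : R) * ∑ q ∈ antidiagonal p.1,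
          (p.1.choose q.1 : R) * ((q.1 : R) ^ q.1 * (-(q.1 : R)) ^ q.2 * y ^ p.2) :=
        sum_antidiagonal_choose_mul_sum_antidiagonal_choose_assoc m
          fun a b c ↦ (a : R) ^ a * (-(a : R)) ^ b * y ^ c
    _ = _ := by
        refine sum_congr rfl fun p _ ↦ ?_
        rw [← sum_antidiagonal_choose_mul_pow_self_mul_neg_pow p.1, sum_mul]
        simp only [mul_assoc]

theorem sum_antidiagonal_choose_mul_pow_self_mul_sum_factorial_sub_pow (n : ℕ) (y : R) :
    ∑ p ∈ antidiagonal n, (n.choose p.1 : R) * ((p.1 : R) ^ p.1 *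
        ∑ q ∈ antidiagonal p.2, (p.2.choose q.1 : R) * ((q.1 ! : R) * (y - p.1) ^ q.2)) =
      ∑ p ∈ antidiagonal n, (n.choose p.1 : R) * (((p.1 + 1)! : R) * y ^ p.2) := by
  calc _ = ∑ p ∈ antidiagonal n, (n.choose p.1 : R) * ∑ q ∈ antidiagonal p.2,
          (p.2.choose q.1 : R) * ((q.1 ! : R) * ((p.1 : R) ^ p.1 * (y - p.1) ^ q.2)) := by
        simp only [mul_sum]
        exact sum_congr rfl fun p _ ↦ sum_congr rfl fun q _ ↦ by ring
    _ = ∑ p ∈ antidiagonal n, (n.choose p.1 : R) * ((p.1 ! : R) * ∑ q ∈ antidiagonal p.2,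
          (p.2.choose q.1 : R) * ((q.1 : R) ^ q.1 * (y - q.1) ^ q.2)) := by
        rw [sum_antidiagonal_choose_mul_sum_antidiagonal_choose_left_comm n
          fun a b c ↦ (b ! : R) * ((a : R) ^ a * (y - a) ^ c)]
        simp only [mul_sum]
        exact sum_congr rfl fun p _ ↦ sum_congr rfl fun q _ ↦ by ring
    _ = ∑ p ∈ antidiagonal n, (n.choose p.1 : R) * ∑ q ∈ antidiagonal p.2,
          (p.2.choose q.1 : R) * ((p.1 ! : R) * ((q.1 ! : R) * y ^ q.2)) := by
        simp only [sum_antidiagonal_choose_mul_pow_self_mul_sub_pow, mul_sum]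
        exact sum_congr rfl fun p _ ↦ sum_congr rfl fun q _ ↦ by ring
    _ = ∑ p ∈ antidiagonal n, (n.choose p.1 : R) * ∑ q ∈ antidiagonal p.1,
          (p.1.choose q.1 : R) * ((q.1 ! : R) * ((q.2 ! : R) * y ^ p.2)) :=
        sum_antidiagonal_choose_mul_sum_antidiagonal_choose_assoc n
          fun a b c ↦ (a ! : R) * ((b ! : R) * y ^ c)
    _ = _ := by
        refine sum_congr rfl fun p _ ↦ ?_
        rw [← sum_antidiagonal_choose_mul_factorial_mul_factorial p.1, sum_mul]
        simp only [mul_assoc]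

theorem sum_antidiagonal_choose_mul_pow_self_mul_pow_self_s3 (m : ℕ) :
    ∑ q ∈ antidiagonal m, (m.choose q.1 : R) * ((q.1 : R) ^ q.1 * (q.2 : R) ^ q.2) =
      ∑ q ∈ antidiagonal m, (m.choose q.1 : R) * ((q.1 ! : R) * (m : R) ^ q.2) := by
  rw [← sum_antidiagonal_choose_mul_pow_self_mul_sub_pow]
  refine sum_congr rfl fun q hq ↦ ?_
  rw [← HasAntidiagonal.mem_antidiagonal.mp hq, Nat.cast_add, add_sub_cancel_left]

theorem sum_antidiagonal_choose_mul_pow_self_mul_sum_choose_mul_pow_self_mul_pow_self (n : ℕ) :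
    ∑ p ∈ antidiagonal n, (n.choose p.1 : R) * ((p.1 : R) ^ p.1 *
        ∑ q ∈ antidiagonal p.2, (p.2.choose q.1 : R) * ((q.1 : R) ^ q.1 * (q.2 : R) ^ q.2)) =
      ∑ p ∈ antidiagonal n, (n.choose p.1 : R) * (((p.1 + 1)! : R) * (n : R) ^ p.2) := by
  rw [← sum_antidiagonal_choose_mul_pow_self_mul_sum_factorial_sub_pow]
  refine sum_congr rfl fun p hp ↦ ?_
  rw [sum_antidiagonal_choose_mul_pow_self_mul_pow_self_s3, ← HasAntidiagonal.mem_antidiagonal.mp hp,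
    Nat.cast_add, add_sub_cancel_left]

end CommRing

theorem beta_eval_general (n : ℕ) :
    (∑ p ∈ Finset.HasAntidiagonal.antidiagonal n, ∑ q ∈ Finset.HasAntidiagonal.antidiagonal p.2,
      n ! / ((p.1)! * (q.1)! * (q.2)!) * p.1 ^ p.1 * q.1 ^ q.1 * q.2 ^ q.2)
    = ∑ k ∈ Finset.range (n + 1), n ! / k ! * (n + 1 - k) * n ^ k := by
  have hLHS : ∀ p ∈ antidiagonal n, ∑ q ∈ antidiagonal p.2,
      n ! / ((p.1)! * (q.1)! * (q.2)!) * p.1 ^ p.1 * q.1 ^ q.1 * q.2 ^ q.2 =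
        n.choose p.1 * (p.1 ^ p.1 *
          ∑ q ∈ antidiagonal p.2, p.2.choose q.1 * (q.1 ^ q.1 * q.2 ^ q.2)) := by
    intro p hp
    simp only [mul_sum]
    refine sum_congr rfl fun q hq ↦ ?_
    rw [← HasAntidiagonal.mem_antidiagonal.mp hp, ← HasAntidiagonal.mem_antidiagonal.mp hq,
      ← add_assoc, Nat.factorial_div_factorial_mul_factorial_mul_factorial_s3]
    ring
  have hRHS : ∀ p ∈ antidiagonal n, n ! / p.2 ! * (n + 1 - p.2) * n ^ p.2 =
      n.choose p.1 * ((p.1 + 1)! * n ^ p.2) := by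
    intro p hp
    rw [← HasAntidiagonal.mem_antidiagonal.mp hp, Nat.factorial_add_div_factorial,
      show p.1 + p.2 + 1 - p.2 = p.1 + 1 by omega, Nat.factorial_succ]
    ring
  calc _ = _ := sum_congr rfl hLHS
    _ = ∑ p ∈ antidiagonal n, n.choose p.1 * ((p.1 + 1)! * n ^ p.2) := by
      exact_mod_cast
        sum_antidiagonal_choose_mul_pow_self_mul_sum_choose_mul_pow_self_mul_pow_self (R := ℤ) n
    _ = ∑ p ∈ antidiagonal n, n ! / p.2 ! * (n + 1 - p.2) * n ^ p.2 := (sum_congr rfl hRHS).symm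
    _ = ∑ p ∈ antidiagonal n, n ! / p.1 ! * (n + 1 - p.1) * n ^ p.1 :=
      Nat.sum_antidiagonal_swap (f := fun p ↦ n ! / p.1 ! * (n + 1 - p.1) * n ^ p.1)
    _ = _ := Nat.sum_antidiagonal_eq_sum_range_succ (fun k _ ↦ n ! / k ! * (n + 1 - k) * n ^ k) n

/-- `β(n) = Σ_{k₁+k₂+k₃=n} (n!/(k₁!k₂!k₃!)) k₁^{k₁} k₂^{k₂} k₃^{k₃}
  = Σ_{k=0}^{n} (n!/k!) (n+1−k) n^k`, with the convention `0^0 = 1`. -/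
theorem beta_eval (n : ℕ) (hn : 0 < n) :
    (∑ p ∈ Finset.HasAntidiagonal.antidiagonal n, ∑ q ∈ Finset.HasAntidiagonal.antidiagonal p.2,
      n ! / ((p.1)! * (q.1)! * (q.2)!) * p.1 ^ p.1 * q.1 ^ q.1 * q.2 ^ q.2)
    = ∑ k ∈ Finset.range (n + 1), n ! / k ! * (n + 1 - k) * n ^ k :=
  beta_eval_general n
end

section
/- For every positive integer n, Σ_{k=0}^{n} (n!/k!) n^k = n^n (1 + Q(n)) as rational numbers, where Q(n) = Σ_{k=1}^{n} n!/((n−k)! n^k) is Ramanujan's Q-function; equivalently, α(n) = n^n(1 + Q(n)) where α(n) = Σ_{k=0}^{n} C(n,k) k^k (n−k)^{n−k} with 0^0 = 1. -/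
/-! Reversing the order of summation, `k ↦ n - k`, turns `n!/k! · n^k` into
`n^n · n!/((n-k)! n^k)`; the reversed term with `k = 0` is the `1`. -/

open Finset Nat

theorem sum_factorial_div_mul_pow_eq_pow_mul_sum {K : Type*} [Field K] [CharZero K]
    (n : ℕ) {x : K} (hx : x ≠ 0) :
    ∑ k ∈ range (n + 1), (n ! : K) / k ! * x ^ k
      = x ^ n * ∑ k ∈ range (n + 1), (n ! : K) / ((n - k)! * x ^ k) := by
  rw [← sum_range_reflect, mul_sum]
  refine sum_congr rfl fun k hk => ?_
  have hkn : k ≤ n := Nat.lt_succ_iff.mp (mem_range.mp hk)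
  rw [add_tsub_cancel_right, ← pow_sub_mul_pow x hkn]
  field_simp

theorem alpha_eq_ramanujanQ_general (n : ℕ) :
    ∑ k ∈ Finset.range (n + 1), (n ! : ℚ) / (k ! : ℚ) * (n : ℚ) ^ k
    = (n : ℚ) ^ n *
        (1 + ∑ k ∈ Finset.Icc 1 n, (n ! : ℚ) / (((n - k)! : ℚ) * (n : ℚ) ^ k)) := by
  rcases Nat.eq_zero_or_pos n with rfl | hn
  · simp
  rw [sum_factorial_div_mul_pow_eq_pow_mul_sum n (Nat.cast_ne_zero.mpr hn.ne'), range_eq_Ico,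
    sum_eq_sum_Ico_succ_bot n.add_one_pos, Ico_add_one_right_eq_Icc]
  simp [n.factorial_ne_zero]

/-- `Σ_{k=0}^{n} (n!/k!) n^k = n^n (1 + Q(n))` as rational numbers, where
`Q(n) = Σ_{k=1}^{n} n!/((n−k)! n^k)` is Ramanujan's `Q`-function. -/
theorem alpha_eq_ramanujanQ (n : ℕ) (hn : 0 < n) :
    ∑ k ∈ Finset.range (n + 1), (n ! : ℚ) / (k ! : ℚ) * (n : ℚ) ^ k
    = (n : ℚ) ^ n *
        (1 + ∑ k ∈ Finset.Icc 1 n, (n ! : ℚ) / (((n - k)! : ℚ) * (n : ℚ) ^ k)) :=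
  alpha_eq_ramanujanQ_general n
end

section
/- Let T be the formal power series over ℚ with coefficients T = Σ_{n≥1} n^{n−1} X^n / n! (the tree function). Then (1 − T) · Σ_{n≥0} (n^n/n!) X^n = 1 in ℚ⟦X⟧; equivalently, Σ_{n≥0} (n^n/n!) X^n = (1 − T)⁻¹, with the convention 0^0 = 1. -/
open Nat PowerSeries

/-!
Write `T = X · B` with `B = Σ (n+1)^(n-1) Xⁿ/n!`, and `F = Σ nⁿ Xⁿ/n! = 1 + X · F₁` with
`F₁ = Σ (n+1)ⁿ Xⁿ/n!`. Comparing coefficients, `B · F = F₁` is Abel's identity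
`Σ_k C(n,k) (k+1)^(k-1) (n-k)^(n-k) = (n+1)ⁿ`, and then `(1 - T) · F = F - X · F₁ = 1`.

Abel's identity is the value at `y = 0` of `A_n(y) = (y+n+1)ⁿ`, where
`A_n(y) = Σ_k C(n,k) (k+1)^(k-1) (y+n-k)^(n-k)`. Both sides satisfy `A_{n+1}' = (n+1) A_n(· + 1)`
and vanish at `y = -(n+2)`, where the left side is an `(n+1)`-st finite difference of `x ↦ xⁿ`.
-/

open Finset

section

variable {R : Type*} [CommRing R]

theorem alternating_sum_choose_mul_add_pow_eq_zero (x : R) {j n : ℕ} (h : j < n) :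
    ∑ k ∈ range (n + 1), (-1 : R) ^ (n - k) * n.choose k * (x + k) ^ j = 0 := by
  have := congrFun (fwdDiff_iter_pow_eq_zero_of_lt (R := R) h) x
  rw [fwdDiff_iter_eq_sum_shift] at this
  simpa [zsmul_eq_mul] using this

theorem succ_pow_pred_mul_succ_pow {i j n : ℕ} (h : i + j = n + 1) :
    ((i : R) + 1) ^ (i - 1) * ((i : R) + 1) ^ j = ((i : R) + 1) ^ n := by
  rcases i with _ | i
  · simp
  · rw [← pow_add]
    congr 1
    omega

end

namespace Polynomial

variable {R : Type*} [CommRing R]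

/-- `A_n(X + c)`, the summand `(i, j)` being the one with `k = i`, `n - k = j`. -/
noncomputable def abelPoly (n : ℕ) (c : R) : R[X] :=
  ∑ p ∈ antidiagonal n, C (n.choose p.1 * ((p.1 : R) + 1) ^ (p.1 - 1)) * (X + C (c + p.2)) ^ p.2

theorem derivative_abelPoly_succ (n : ℕ) (c : R) :
    derivative (abelPoly (n + 1) c) = C ((n : R) + 1) * abelPoly n (c + 1) := by
  rw [abelPoly, abelPoly, Nat.sum_antidiagonal_succ', map_add, pow_zero, mul_one, derivative_C,
    zero_add, map_sum, mul_sum]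
  refine sum_congr rfl fun ⟨i, j⟩ hij => ?_
  rw [HasAntidiagonal.mem_antidiagonal] at hij
  have hchoose : ((n + 1).choose i * (j + 1) : R) = (n + 1) * n.choose i := by
    have := congrArg (Nat.cast : ℕ → R) (Nat.choose_mul_succ_eq n i)
    rw [show n + 1 - i = j + 1 by omega] at this
    push_cast at this
    linear_combination -this
  simp only [derivative_mul, derivative_C, zero_mul, zero_add, derivative_pow, derivative_add,
    derivative_X, add_zero, mul_one, Nat.add_sub_cancel]
  rw [show c + 1 + (j : R) = c + ((j + 1 : ℕ) : R) by push_cast; ring]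
  simp only [← mul_assoc, ← C_mul]
  congr 2
  push_cast
  linear_combination ((i : R) + 1) ^ (i - 1) * hchoose

theorem eval_abelPoly_succ_eq_zero (n : ℕ) (c : R) :
    (abelPoly (n + 1) c).eval (-(c + n + 2)) = 0 := by
  have hterm : ∀ p ∈ antidiagonal (n + 1),
      eval (-(c + n + 2)) (C ((n + 1).choose p.1 * ((p.1 : R) + 1) ^ (p.1 - 1)) *
        (X + C (c + p.2)) ^ p.2) = (-1) ^ p.2 * (n + 1).choose p.1 * (1 + p.1 : R) ^ n := by
    rintro ⟨i, j⟩ hij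
    have hij : i + j = n + 1 := HasAntidiagonal.mem_antidiagonal.mp hij
    have hroot : -(c + n + 2) + (c + j) = -((i : R) + 1) := by
      have := congrArg (Nat.cast : ℕ → R) hij
      push_cast at this
      linear_combination this
    simp only [eval_mul, eval_pow, eval_add, eval_X, eval_C]
    rw [hroot, neg_pow]
    linear_combination (-1) ^ j * ((n + 1).choose i : R) * succ_pow_pred_mul_succ_pow (R := R) hij
  rw [abelPoly, eval_finsetSum, sum_congr rfl hterm,
    Nat.sum_antidiagonal_eq_sum_range_succ
      (fun i j => (-1 : R) ^ j * (n + 1).choose i * (1 + i : R) ^ n)]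
  exact alternating_sum_choose_mul_add_pow_eq_zero 1 n.lt_succ_self

theorem abelPoly_eq [IsAddTorsionFree R] (n : ℕ) (c : R) :
    abelPoly n c = (X + C (c + n + 1)) ^ n := by
  induction n generalizing c with
  | zero => simp [abelPoly]
  | succ n ih =>
    set D := abelPoly (n + 1) c - (X + C (c + (n + 1 : ℕ) + 1)) ^ (n + 1)
    have hD' : derivative D = 0 := by
      rw [map_sub, derivative_abelPoly_succ, ih, derivative_X_add_C_pow]
      push_cast
      ring_nf
    have hD : D.eval (-(c + n + 2)) = 0 := by
      rw [eval_sub, eval_abelPoly_succ_eq_zero, eval_pow, eval_add, eval_X, eval_C]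
      push_cast
      ring
    have hD0 : D = 0 := by
      rw [eq_C_of_derivative_eq_zero hD'] at hD ⊢
      rw [eval_C] at hD
      rw [hD, map_zero]
    exact sub_eq_zero.mp hD0

end Polynomial

section TreeFunction

variable {K : Type*} [Field K] [CharZero K]

theorem succ_pow_succ_div_factorial_succ (n k : ℕ) :
    ((n : K) + 1) ^ (k + 1) / (n + 1)! = ((n : K) + 1) ^ k / n ! := by
  rw [Nat.factorial_succ, Nat.cast_mul, pow_succ]
  push_cast
  field_simp

theorem mk_succ_pow_pred_div_factorial_mul_mk_pow_self_div_factorial :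
    mk (fun n => ((n : K) + 1) ^ (n - 1) / n !) * mk (fun n => (n : K) ^ n / n !) =
      mk fun n => ((n : K) + 1) ^ n / n ! := by
  ext n
  have habel := congrArg (Polynomial.eval 0) (Polynomial.abelPoly_eq (R := K) n 0)
  simp only [Polynomial.abelPoly, Polynomial.eval_finsetSum, Polynomial.eval_mul,
    Polynomial.eval_pow, Polynomial.eval_add, Polynomial.eval_X, Polynomial.eval_C,
    zero_add] at habel
  rw [coeff_mul, coeff_mk, ← habel, sum_div]
  refine sum_congr rfl fun ⟨i, j⟩ hij => ?_
  obtain rfl : i + j = n := HasAntidiagonal.mem_antidiagonal.mp hij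
  have hfact : ((i + j)! : K) ≠ 0 := Nat.cast_ne_zero.mpr (factorial_ne_zero _)
  simp only [coeff_mk, Nat.cast_add_choose]
  field_simp

theorem mk_pow_self_div_factorial_eq_one_add_X_mul :
    mk (fun n => (n : K) ^ n / n !) = 1 + X * mk fun n => ((n : K) + 1) ^ n / n ! := by
  ext (_ | n)
  · simp
  · rw [map_add, coeff_succ_X_mul, coeff_mk, coeff_mk, coeff_one, if_neg n.succ_ne_zero, zero_add,
      Nat.cast_succ, succ_pow_succ_div_factorial_succ]

theorem treeFun_eq_X_mul :
    (mk fun n => if n = 0 then 0 else (n : K) ^ (n - 1) / n !) =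
      X * mk fun n => ((n : K) + 1) ^ (n - 1) / n ! := by
  ext (_ | _ | n)
  · simp
  · simp
  · rw [coeff_succ_X_mul, coeff_mk, coeff_mk, if_neg (Nat.succ_ne_zero _), Nat.add_sub_cancel,
      Nat.add_sub_cancel, Nat.cast_succ, succ_pow_succ_div_factorial_succ]

end TreeFunction

/-- For the tree function `T = Σ_{n≥1} n^{n−1} X^n / n!` in `ℚ⟦X⟧`, we have
`(1 − T) · Σ_{n≥0} (n^n/n!) X^n = 1`, with the convention `0^0 = 1`. -/
theorem treeFun_inv (T : PowerSeries ℚ)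
    (hT : T = PowerSeries.mk fun n => if n = 0 then 0 else (n : ℚ) ^ (n - 1) / n !) :
    (1 - T) * PowerSeries.mk (fun n => (n : ℚ) ^ n / n !) = 1 := by
  rw [hT, treeFun_eq_X_mul]
  linear_combination mk_pow_self_div_factorial_eq_one_add_X_mul (K := ℚ) -
    X * mk_succ_pow_pred_div_factorial_mul_mk_pow_self_div_factorial (K := ℚ)
end
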